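/- If f : M₁ → M₂ is a surjective homomorphism of pseudo MV-algebras and r is a square root on M₁, then the map τ : M₂ → M₂ defined by τ(f(x)) = f(r(x)) is a well-defined square root on M₂. -/

import Mathlib

/-- A pseudo MV-algebra `(M; ⊕, ⁻, ∼, 0, 1)` satisfying axioms (A1)–(A8),
with `x ⊙ y := (y⁻ ⊕ x⁻)∼`. -/
class PseudoMV (M : Type*) where
  oplus : M → M → M
  lneg : M → M
  rneg : M → M
  zero : M
  one : M
  oplus_assoc : ∀ x y z : M, oplus x (oplus y z) = oplus (oplus x y) z
  oplus_zero : ∀ x : M, oplus x zero = x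
  zero_oplus : ∀ x : M, oplus zero x = x
  oplus_one : ∀ x : M, oplus x one = one
  one_oplus : ∀ x : M, oplus one x = one
  lneg_one : lneg one = zero
  rneg_one : rneg one = zero
  a5 : ∀ x y : M, rneg (oplus (lneg x) (lneg y)) = lneg (oplus (rneg x) (rneg y))
  a6₁ : ∀ x y : M,
    oplus x (rneg (oplus (lneg y) (lneg (rneg x)))) =
      oplus y (rneg (oplus (lneg x) (lneg (rneg y))))
  a6₂ : ∀ x y : M,
    oplus x (rneg (oplus (lneg y) (lneg (rneg x)))) =
      oplus (rneg (oplus (lneg (lneg y)) (lneg x))) y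
  a6₃ : ∀ x y : M,
    oplus x (rneg (oplus (lneg y) (lneg (rneg x)))) =
      oplus (rneg (oplus (lneg (lneg x)) (lneg y))) x
  a7 : ∀ x y : M,
    rneg (oplus (lneg (oplus (lneg x) y)) (lneg x)) =
      rneg (oplus (lneg y) (lneg (oplus x (rneg y))))
  a8 : ∀ x : M, rneg (lneg x) = x

namespace PseudoMV

variable {M : Type*} [PseudoMV M]

/-- `x ⊙ y := (y⁻ ⊕ x⁻)∼`. -/
def mul (x y : M) : M := rneg (oplus (lneg y) (lneg x))

/-- `x ∨ y = x ⊕ (x∼ ⊙ y)` (axiom (A6)). -/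
def sup (x y : M) : M := oplus x (mul (rneg x) y)

/-- `x ∧ y = x ⊙ (x⁻ ⊕ y)` (axiom (A7)). -/
def inf (x y : M) : M := mul x (oplus (lneg x) y)

/-- The lattice order of a pseudo MV-algebra. -/
def le (x y : M) : Prop := sup x y = y

/-- `x → y := x⁻ ⊕ y`. -/
def arrow (x y : M) : M := oplus (lneg x) y

/-- `x ⇝ y := y ⊕ x∼`. -/
def squig (x y : M) : M := oplus y (rneg x)

/-- A weak square root: (Sq1) and (Sq2). -/
def IsWeakSqrt (r : M → M) : Prop :=
  (∀ x : M, mul (r x) (r x) = x) ∧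
  (∀ x y : M, le (mul y y) x → le y (r x))

/-- A square root: (Sq1), (Sq2) and (Sq3). -/
def IsSqrt (r : M → M) : Prop :=
  IsWeakSqrt r ∧
  (∀ x : M, r (lneg x) = arrow (r x) (r zero) ∧ r (rneg x) = squig (r x) (r zero))

end PseudoMV

open PseudoMV

/-!
Everything hinges on `τ` being well defined. The key fact is that `f y ⊙ f y ≤ f a` forces
`f y ≤ f (r a)`: the defect `e := a∼ ⊙ (y ⊙ y)` satisfies `y ⊙ y ≤ a ∨ (y ⊙ y) = a ⊕ e` and
`f e = 0`, while residuation and (Sq2) turn `y ⊙ y ≤ a ⊕ e` into `y ≤ r a ⊕ e`, whose image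
under `f` is `f y ≤ f (r a)`. Taking `y = r b` with `f b = f a` and symmetrizing gives
`f (r a) = f (r b)`; (Sq1)–(Sq3) for `τ` are then the images under `f` of those for `r`.
-/
namespace PseudoMV

variable {M : Type*} [PseudoMV M]

theorem lneg_rneg (x : M) : lneg (rneg x) = x := by
  have h := a5 x (one : M)
  rw [lneg_one, rneg_one, oplus_zero, oplus_zero, a8] at h
  exact h.symm

theorem lneg_zero : (lneg zero : M) = one := by
  rw [← rneg_one, lneg_rneg]

theorem rneg_eq_zero_iff {x : M} : rneg x = zero ↔ x = one :=
  ⟨fun h => by rw [← lneg_rneg x, h, lneg_zero], fun h => h ▸ rneg_one⟩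

theorem mul_one (x : M) : mul x one = x := by
  rw [mul, lneg_one, zero_oplus, a8]

theorem mul_zero (x : M) : mul x zero = zero := by
  rw [mul, lneg_zero, one_oplus, rneg_one]

theorem lneg_mul (x y : M) : lneg (mul x y) = oplus (lneg y) (lneg x) :=
  lneg_rneg _

theorem rneg_mul (x y : M) : rneg (mul x y) = oplus (rneg y) (rneg x) := by
  rw [mul, a5, a8]

theorem mul_assoc (x y z : M) : mul (mul x y) z = mul x (mul y z) := by
  simp only [mul, lneg_rneg, oplus_assoc]

theorem lneg_oplus_self (x : M) : oplus (lneg x) x = one := by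
  have h := a7 (rneg x) (zero : M)
  rw [oplus_zero, lneg_rneg, lneg_zero, one_oplus, rneg_one] at h
  exact rneg_eq_zero_iff.mp h

theorem mul_lneg_self (x : M) : mul x (lneg x) = zero := by
  rw [mul, lneg_oplus_self, rneg_one]

theorem sup_comm (x y : M) : sup x y = sup y x :=
  a6₁ x y

theorem lneg_oplus_eq_one_of_le {x y : M} (h : le x y) : oplus (lneg x) y = one := by
  rw [← show sup x y = y from h, sup, oplus_assoc, lneg_oplus_self, one_oplus]

theorem eq_mul_of_lneg_oplus_eq_one {x y : M} (h : oplus (lneg x) y = one) :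
    x = mul (oplus x (rneg y)) y := by
  have h7 : mul x (oplus (lneg x) y) = mul (oplus x (rneg y)) y := a7 x y
  rwa [h, mul_one] at h7

theorem le_of_mul_lneg_eq_zero {x y : M} (h : mul x (lneg y) = zero) : le x y := by
  show sup x y = y
  calc sup x y = oplus (mul x (lneg y)) y := a6₂ x y
    _ = y := by rw [h, zero_oplus]

theorem mul_lneg_eq_zero_of_lneg_oplus_eq_one {x y : M} (h : oplus (lneg x) y = one) :
    mul x (lneg y) = zero := by
  rw [eq_mul_of_lneg_oplus_eq_one h, mul_assoc, mul_lneg_self, mul_zero]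

theorem le_iff_mul_lneg_eq_zero {x y : M} : le x y ↔ mul x (lneg y) = zero :=
  ⟨fun h => mul_lneg_eq_zero_of_lneg_oplus_eq_one (lneg_oplus_eq_one_of_le h),
    le_of_mul_lneg_eq_zero⟩

theorem le_iff_lneg_oplus_eq_one {x y : M} : le x y ↔ oplus (lneg x) y = one :=
  ⟨lneg_oplus_eq_one_of_le,
    fun h => le_of_mul_lneg_eq_zero (mul_lneg_eq_zero_of_lneg_oplus_eq_one h)⟩

theorem le_iff_rneg_mul_eq_zero {x y : M} : le x y ↔ mul (rneg y) x = zero := by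
  rw [le_iff_lneg_oplus_eq_one, mul, lneg_rneg, rneg_eq_zero_iff]

theorem le_refl (x : M) : le x x :=
  le_of_mul_lneg_eq_zero (mul_lneg_self x)

theorem le_trans {x y z : M} (hxy : le x y) (hyz : le y z) : le x z := by
  rw [le_iff_mul_lneg_eq_zero, eq_mul_of_lneg_oplus_eq_one (lneg_oplus_eq_one_of_le hxy),
    mul_assoc, le_iff_mul_lneg_eq_zero.mp hyz, mul_zero]

theorem le_antisymm {x y : M} (hxy : le x y) (hyx : le y x) : x = y := by
  rw [← show sup x y = y from hxy, sup_comm, show sup y x = x from hyx]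

theorem le_sup_right (x y : M) : le y (sup x y) := by
  rw [sup_comm, le_iff_lneg_oplus_eq_one, sup, oplus_assoc, lneg_oplus_self, one_oplus]

theorem mul_le_iff_le_oplus_rneg {x y z : M} : le (mul x y) z ↔ le x (oplus z (rneg y)) := by
  rw [le_iff_mul_lneg_eq_zero, mul_assoc, ← lneg_rneg (mul y (lneg z)),
    ← le_iff_mul_lneg_eq_zero, rneg_mul, a8]

theorem mul_le_iff_le_lneg_oplus {x y z : M} : le (mul x y) z ↔ le y (oplus (lneg x) z) := by
  rw [le_iff_rneg_mul_eq_zero, ← mul_assoc, ← a8 (mul (rneg z) x),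
    ← le_iff_rneg_mul_eq_zero, lneg_mul, lneg_rneg]

theorem mul_le_mul_left {x y : M} (z : M) (h : le x y) : le (mul z x) (mul z y) :=
  mul_le_iff_le_lneg_oplus.mpr (le_trans h (mul_le_iff_le_lneg_oplus.mp (le_refl _)))

theorem mul_le_mul_right {x y : M} (z : M) (h : le x y) : le (mul x z) (mul y z) :=
  mul_le_iff_le_oplus_rneg.mpr (le_trans h (mul_le_iff_le_oplus_rneg.mp (le_refl _)))

theorem mul_le_right (x y : M) : le (mul x y) y := by
  rw [le_iff_mul_lneg_eq_zero, mul_assoc, mul_lneg_self, mul_zero]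

theorem IsWeakSqrt.le_oplus_of_mul_self_le_oplus {r : M → M} (hr : IsWeakSqrt r) {y a e : M}
    (h : le (mul y y) (oplus a e)) : le y (oplus (r a) e) := by
  rw [← a8 e, ← mul_le_iff_le_oplus_rneg]
  apply hr.2
  have hsq : le (mul (mul y (lneg e)) (mul y (lneg e))) (mul (mul y y) (lneg e)) := by
    rw [mul_assoc, mul_assoc, ← mul_assoc (lneg e)]
    exact mul_le_mul_left y (mul_le_mul_right (lneg e) (mul_le_right (lneg e) y))
  exact le_trans hsq (mul_le_iff_le_oplus_rneg.mpr (by rwa [a8]))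

/-- Preservation of `0 = x ⊙ x⁻` follows, see `IsHom.map_zero`. -/
structure IsHom {M₂ : Type*} [PseudoMV M₂] (f : M → M₂) : Prop where
  map_oplus : ∀ x y, f (oplus x y) = oplus (f x) (f y)
  map_lneg : ∀ x, f (lneg x) = lneg (f x)
  map_rneg : ∀ x, f (rneg x) = rneg (f x)

namespace IsHom

variable {M₂ : Type*} [PseudoMV M₂] {f : M → M₂}

theorem map_mul (hf : IsHom f) (x y : M) : f (mul x y) = mul (f x) (f y) := by
  rw [mul, mul, hf.map_rneg, hf.map_oplus, hf.map_lneg, hf.map_lneg]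

theorem map_zero (hf : IsHom f) : f zero = zero := by
  rw [← mul_lneg_self zero, hf.map_mul, hf.map_lneg, mul_lneg_self]

theorem map_sup (hf : IsHom f) (x y : M) : f (sup x y) = sup (f x) (f y) := by
  rw [sup, sup, hf.map_oplus, hf.map_mul, hf.map_rneg]

theorem map_le (hf : IsHom f) {x y : M} (h : le x y) : le (f x) (f y) := by
  show sup (f x) (f y) = f y
  rw [← hf.map_sup, show sup x y = y from h]

theorem map_arrow (hf : IsHom f) (x y : M) : f (arrow x y) = arrow (f x) (f y) := by
  rw [arrow, arrow, hf.map_oplus, hf.map_lneg]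

theorem map_squig (hf : IsHom f) (x y : M) : f (squig x y) = squig (f x) (f y) := by
  rw [squig, squig, hf.map_oplus, hf.map_rneg]

theorem le_map_sqrt_of_mul_self_le (hf : IsHom f) {r : M → M} (hr : IsWeakSqrt r) {y a : M}
    (h : le (mul (f y) (f y)) (f a)) : le (f y) (f (r a)) := by
  have hdefect : f (mul (rneg a) (mul y y)) = zero := by
    rw [hf.map_mul, hf.map_rneg, hf.map_mul]
    exact le_iff_rneg_mul_eq_zero.mp h
  have hle := hf.map_le (hr.le_oplus_of_mul_self_le_oplus (le_sup_right a (mul y y)))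
  rwa [hf.map_oplus, hdefect, oplus_zero] at hle

theorem map_sqrt_eq_of_map_eq (hf : IsHom f) {r : M → M} (hr : IsWeakSqrt r) {a b : M}
    (hab : f a = f b) : f (r a) = f (r b) := by
  have key : ∀ {p q : M}, f p = f q → le (f (r p)) (f (r q)) := fun {p q} hpq =>
    hf.le_map_sqrt_of_mul_self_le hr (by rw [← hf.map_mul, hr.1, hpq]; exact le_refl _)
  exact le_antisymm (key hab) (key hab.symm)

end IsHom

section Semiconj

variable {M₂ : Type*} [PseudoMV M₂] {f : M → M₂} {r : M → M} {τ : M₂ → M₂}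

theorem IsWeakSqrt.of_semiconj (hf : IsHom f) (hsur : Function.Surjective f)
    (hτ : ∀ x, τ (f x) = f (r x)) (hr : IsWeakSqrt r) : IsWeakSqrt τ := by
  refine ⟨fun z => ?_, fun z w h => ?_⟩
  · obtain ⟨x, rfl⟩ := hsur z
    rw [hτ, ← hf.map_mul, hr.1]
  · obtain ⟨a, rfl⟩ := hsur z
    obtain ⟨y, rfl⟩ := hsur w
    rw [hτ]
    exact hf.le_map_sqrt_of_mul_self_le hr h

theorem IsSqrt.of_semiconj (hf : IsHom f) (hsur : Function.Surjective f)
    (hτ : ∀ x, τ (f x) = f (r x)) (hr : IsSqrt r) : IsSqrt τ := by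
  refine ⟨hr.1.of_semiconj hf hsur hτ, fun z => ?_⟩
  obtain ⟨x, rfl⟩ := hsur z
  rw [← hf.map_lneg, ← hf.map_rneg, ← hf.map_zero, hτ, hτ, hτ, hτ, (hr.2 x).1, (hr.2 x).2,
    hf.map_arrow, hf.map_squig]
  exact ⟨rfl, rfl⟩

end Semiconj

end PseudoMV

theorem stmt12_general {M₁ M₂ : Type*} [PseudoMV M₁] [PseudoMV M₂] (f : M₁ → M₂)
    (hsur : Function.Surjective f)
    (hadd : ∀ x y : M₁, f (oplus x y) = oplus (f x) (f y))
    (hln : ∀ x : M₁, f (lneg x) = lneg (f x))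
    (hrn : ∀ x : M₁, f (rneg x) = rneg (f x))
    (r : M₁ → M₁) (hr : IsSqrt r) :
    ∃ τ : M₂ → M₂, (∀ x : M₁, τ (f x) = f (r x)) ∧ IsSqrt τ := by
  have hf : IsHom f := ⟨hadd, hln, hrn⟩
  have hτ (x : M₁) : f (r (Function.surjInv hsur (f x))) = f (r x) :=
    hf.map_sqrt_eq_of_map_eq hr.1 (Function.surjInv_eq hsur (f x))
  exact ⟨fun z => f (r (Function.surjInv hsur z)), hτ, hr.of_semiconj hf hsur hτ⟩

theorem stmt12 {M₁ M₂ : Type*} [PseudoMV M₁] [PseudoMV M₂] (f : M₁ → M₂)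
    (hsur : Function.Surjective f)
    (hadd : ∀ x y : M₁, f (oplus x y) = oplus (f x) (f y))
    (hln : ∀ x : M₁, f (lneg x) = lneg (f x))
    (hrn : ∀ x : M₁, f (rneg x) = rneg (f x))
    (h0 : f zero = zero) (h1 : f one = one)
    (r : M₁ → M₁) (hr : IsSqrt r) :
    ∃ τ : M₂ → M₂, (∀ x : M₁, τ (f x) = f (r x)) ∧ IsSqrt τ :=
  stmt12_general f hsur hadd hln hrn r hr
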